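/- arXiv:0807.0595 — 3 statements merged into one kernel-verified Lean document; each statement's English description precedes it below -/
import Mathlib

section
/- Let F be a field, let f ∈ F[x] be monic of degree m with f(0) ≠ 0, irreducible over F, with finite order ord(f) and no multiple zeros. Then every f-subgroup K in an extension field L of F is of the form K = ⟨ξ⟩ = {1, ξ, ξ², …} for some zero ξ of f lying in L. -/
open Polynomial

/-- The subgroup `⟨ξ⟩ = {1, ξ, ξ², …}` of powers of an element `ξ`. -/
def powersOf {E : Type*} [Monoid E] (ξ : E) : Set E := {x | ∃ k : ℕ, x = ξ ^ k}

/-- The map `x ↦ L₀x + L₁x^q + ⋯ + L_{m-1}x^{q^{m-1}}` given by the `q`-polynomial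
with coefficient vector `c`. -/
def qPolyMap {E : Type*} [Field E] (q : ℕ) {m : ℕ} (c : Fin m → E) (x : E) : E :=
  ∑ i : Fin m, c i * x ^ q ^ (i : ℕ)

/-- `u` is a linear recurring sequence (an `f`-sequence) with characteristic polynomial
`f = xᵐ - σ_{m-1}x^{m-1} - ⋯ - σ₀`, i.e. `u_{k+m} = σ_{m-1}u_{k+m-1} + ⋯ + σ₀u_k`
where `σᵢ = -(f.coeff i)`. -/
def IsLRS {F E : Type*} [Field F] [Field E] [Algebra F E] (f : Polynomial F) (u : ℕ → E) : Prop :=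
  ∀ k : ℕ, u (k + f.natDegree) =
    ∑ i ∈ Finset.range f.natDegree, algebraMap F E (-(f.coeff i)) * u (k + i)

/-- The `q`-order of `ξ` over `F`: the least `d > 0` with `ξ ^ d ∈ F`. -/
noncomputable def qOrder (F : Type*) {E : Type*} [Field F] [Field E] [Algebra F E] (ξ : E) : ℕ :=
  sInf {d : ℕ | 0 < d ∧ ξ ^ d ∈ Set.range (algebraMap F E)}

/-- `ξ` is nonstandard of degree `m` over `F`: its minimal polynomial `f` over `F` has
degree `m`, and `⟨ξ⟩` can be generated by an `f`-sequence `u` of smallest period `|⟨ξ⟩|`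
with `u 0 = 1` and `(u_0, …, u_{m-1}) ≠ (1, ζ, …, ζ^{m-1})` for every zero `ζ` of `f`. -/
def IsNonstandard (F : Type*) {E : Type*} [Field F] [Field E] [Algebra F E]
    (m : ℕ) (ξ : E) : Prop :=
  (minpoly F ξ).natDegree = m ∧
  ∃ u : ℕ → E, IsLRS (minpoly F ξ) u ∧
    IsLeast {p : ℕ | 0 < p ∧ ∀ k, u (k + p) = u k} (orderOf ξ) ∧
    Set.range u = powersOf ξ ∧
    u 0 = 1 ∧
    ∀ ζ : E, (aeval ζ) (minpoly F ξ) = 0 → ∃ i : Fin m, u (i : ℕ) ≠ ζ ^ (i : ℕ)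

/-!
Let `n = |K|`, the least period of the `f`-sequence `u`. Polynomials act on sequences through the
shift operator; `u` is killed by `f` and, being `n`-periodic, by `Xⁿ - 1`. As `u ≠ 0` and `f` is
irreducible, `f ∣ Xⁿ - 1`. The `n` elements of `K` are `n`-th roots of unity, so `K` is the whole
group of `n`-th roots of unity in `L`; being cyclic, it contains a primitive one, hence `Xⁿ - 1`
splits over `L` and so does `f`. For a zero `ξ ∈ L` of `f` of order `t`, `f` is the minimal
polynomial of `ξ`, so `f ∣ Xᵗ - 1` and `u` is `t`-periodic; hence `n ≤ t ∣ n`, and `ξ` is a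
primitive `n`-th root of unity, which generates `K`.
-/

open Function

section Shift

variable {R : Type*} [CommRing R]

def seqShift (R : Type*) [CommRing R] : Module.End R (ℕ → R) where
  toFun u k := u (k + 1)
  map_add' _ _ := rfl
  map_smul' _ _ := rfl

lemma seqShift_pow_apply (i : ℕ) (u : ℕ → R) (k : ℕ) : (seqShift R ^ i) u k = u (k + i) := by
  induction i generalizing u with
  | zero => rfl
  | succ j ih => rw [pow_succ, Module.End.mul_apply, ih]; rfl

lemma aeval_seqShift_apply (p : R[X]) (u : ℕ → R) (k : ℕ) :
    aeval (seqShift R) p u k = ∑ i ∈ Finset.range (p.natDegree + 1), p.coeff i * u (k + i) := by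
  simp [aeval_eq_sum_range, LinearMap.sum_apply, seqShift_pow_apply]

lemma aeval_seqShift_X_pow_sub_one_eq_zero_iff {t : ℕ} {u : ℕ → R} :
    aeval (seqShift R) (X ^ t - 1 : R[X]) u = 0 ↔ Periodic u t := by
  simp only [map_sub, map_pow, aeval_X, map_one, LinearMap.sub_apply, Module.End.one_apply,
    sub_eq_zero, funext_iff, seqShift_pow_apply, Periodic]

lemma eq_zero_of_isCoprime_of_aeval_seqShift_eq_zero {p q : R[X]} {u : ℕ → R}
    (hpq : IsCoprime p q) (hp : aeval (seqShift R) p u = 0) (hq : aeval (seqShift R) q u = 0) :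
    u = 0 := by
  obtain ⟨a, b, hab⟩ := hpq
  simpa [hp, hq] using congrArg (fun r => aeval (seqShift R) r u) hab.symm

end Shift

section LinearRecurrence

variable {F L : Type*} [Field F] [Field L] [Algebra F L] {f : F[X]} {u : ℕ → L}

lemma IsLRS.aeval_seqShift_eq_zero (hmon : f.Monic) (hu : IsLRS f u) :
    aeval (seqShift L) (f.map (algebraMap F L)) u = 0 := by
  funext k
  rw [aeval_seqShift_apply, hmon.natDegree_map, Finset.sum_range_succ, coeff_map,
    hmon.coeff_natDegree, map_one, one_mul, hu k, ← Finset.sum_add_distrib]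
  exact Finset.sum_eq_zero fun i _ => by simp [coeff_map]

lemma IsLRS.periodic_of_dvd (hmon : f.Monic) (hu : IsLRS f u) {t : ℕ} (h : f ∣ X ^ t - 1) :
    Periodic u t := by
  obtain ⟨g, hg⟩ := Polynomial.map_dvd (algebraMap F L) h
  rw [← aeval_seqShift_X_pow_sub_one_eq_zero_iff]
  simp only [Polynomial.map_sub, Polynomial.map_pow, map_X, Polynomial.map_one] at hg
  rw [hg, mul_comm, map_mul, Module.End.mul_apply, hu.aeval_seqShift_eq_zero hmon, map_zero]

lemma IsLRS.dvd_X_pow_sub_one_of_periodic (hmon : f.Monic) (hirr : Irreducible f)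
    (hu : IsLRS f u) (hu0 : u ≠ 0) {t : ℕ} (hp : Periodic u t) : f ∣ X ^ t - 1 := by
  refine (hirr.isCoprime_or_dvd _).resolve_left fun hco => hu0 ?_
  have hcoL := hco.map (mapRingHom (algebraMap F L))
  simp only [coe_mapRingHom, Polynomial.map_sub, Polynomial.map_pow, map_X,
    Polynomial.map_one] at hcoL
  exact eq_zero_of_isCoprime_of_aeval_seqShift_eq_zero hcoL (hu.aeval_seqShift_eq_zero hmon)
    (aeval_seqShift_X_pow_sub_one_eq_zero_iff.mpr hp)

lemma IsLRS.orderOf_eq_of_aeval_eq_zero (hmon : f.Monic) (hirr : Irreducible f)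
    (hu : IsLRS f u) (hu0 : u ≠ 0) {n : ℕ} (hn : IsLeast {p | 0 < p ∧ Periodic u p} n)
    {E : Type*} [Field E] [Algebra F E] {ξ : E} (hξ : aeval ξ f = 0) : orderOf ξ = n := by
  have hfmin : f = minpoly F ξ := minpoly.eq_of_irreducible_of_monic hirr hξ hmon
  have hdvd_iff (t : ℕ) : f ∣ X ^ t - 1 ↔ ξ ^ t = 1 := by
    rw [hfmin, minpoly.dvd_iff, map_sub, map_pow, aeval_X, map_one, sub_eq_zero]
  have hξn : ξ ^ n = 1 :=
    (hdvd_iff n).mp (hu.dvd_X_pow_sub_one_of_periodic hmon hirr hu0 hn.1.2)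
  have hpos : 0 < orderOf ξ :=
    (isOfFinOrder_iff_pow_eq_one.mpr ⟨n, hn.1.1, hξn⟩).orderOf_pos
  refine le_antisymm (orderOf_le_of_pow_eq_one hn.1.1 hξn) (hn.2 ⟨hpos, ?_⟩)
  exact hu.periodic_of_dvd hmon ((hdvd_iff _).mpr (pow_orderOf_eq_one ξ))

end LinearRecurrence

section UnitsSubgroup

lemma Subgroup.ncard_image_val {M : Type*} [Monoid M] (H : Subgroup Mˣ) :
    (Units.val '' (H : Set Mˣ)).ncard = Nat.card H := by
  rw [Set.ncard_image_of_injective _ Units.val_injective]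
  exact (Nat.card_coe_set_eq _).symm

variable {R : Type*} [CommRing R] [IsDomain R] (H : Subgroup Rˣ) [Finite H]

lemma Subgroup.eq_rootsOfUnity_natCard : H = rootsOfUnity (Nat.card H) R :=
  Subgroup.eq_of_le_of_card_ge (fun x hx => (mem_rootsOfUnity _ _).mpr <|
    congrArg Subtype.val (pow_card_eq_one' (G := H) (x := ⟨x, hx⟩))) (card_rootsOfUnity R _)

lemma Subgroup.exists_isPrimitiveRoot_natCard : ∃ ζ : R, IsPrimitiveRoot ζ (Nat.card H) := by
  have : NeZero (Nat.card H) := ⟨Nat.card_pos.ne'⟩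
  rw [← card_rootsOfUnity_eq_iff_exists_isPrimitiveRoot, ← H.eq_rootsOfUnity_natCard]

lemma Subgroup.image_val_eq_powersOf {ξ : R} (hξ : IsPrimitiveRoot ξ (Nat.card H)) :
    Units.val '' (H : Set Rˣ) = powersOf ξ := by
  have : NeZero (Nat.card H) := ⟨Nat.card_pos.ne'⟩
  obtain ⟨ζ, rfl⟩ := hξ.isUnit (NeZero.ne _)
  rw [IsPrimitiveRoot.coe_units_iff] at hξ
  rw [H.eq_rootsOfUnity_natCard, ← hξ.zpowers_eq,
    ← (isOfFinOrder_iff_pow_eq_one.mpr ⟨_, NeZero.pos _, hξ.pow_eq_one⟩).powers_eq_zpowers]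
  ext x
  simp [powersOf, Submonoid.mem_powers_iff, eq_comm]

end UnitsSubgroup

lemma exists_aeval_eq_zero_of_dvd_X_pow_sub_one {F L : Type*} [Field F] [Field L] [Algebra F L]
    {f : F[X]} (hf : 0 < f.degree) {n : ℕ} (hn : n ≠ 0) (hfn : f ∣ X ^ n - 1) {ζ : L}
    (hζ : IsPrimitiveRoot ζ n) : ∃ ξ : L, aeval ξ f = 0 := by
  have hsplit : Splits (f.map (algebraMap F L)) := by
    refine (X_pow_sub_one_splits hζ).of_dvd (X_pow_sub_C_ne_zero (Nat.pos_of_ne_zero hn) 1) ?_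
    simpa using Polynomial.map_dvd (algebraMap F L) hfn
  obtain ⟨ξ, hξ⟩ := hsplit.exists_eval_eq_zero (by rw [degree_map]; exact hf.ne')
  exact ⟨ξ, by rwa [aeval_def, eval₂_eq_eval_map]⟩

theorem fSubgroup_eq_powers_of_root_general {F L : Type*} [Field F] [Field L] [Algebra F L]
    (f : Polynomial F) (hmon : f.Monic) (hirr : Irreducible f)
    (K : Set L) (hKgrp : ∃ H : Subgroup Lˣ, K = Units.val '' (H : Set Lˣ))
    (hK : ∃ u : ℕ → L, IsLRS f u ∧
      IsLeast {p : ℕ | 0 < p ∧ ∀ k, u (k + p) = u k} K.ncard ∧ Set.range u = K) :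
    ∃ ξ : L, (aeval ξ) f = 0 ∧ K = powersOf ξ := by
  obtain ⟨H, rfl⟩ := hKgrp
  obtain ⟨u, hu, hleast, hrange⟩ := hK
  have : Finite H := Set.finite_coe_iff.mpr
    ((Set.finite_of_ncard_pos hleast.1.1).of_finite_image Units.val_injective.injOn)
  rw [H.ncard_image_val] at hleast
  have hu0 : u ≠ 0 := by
    rintro rfl
    have h1 : (1 : L) ∈ Set.range (0 : ℕ → L) := hrange ▸ ⟨1, H.one_mem, rfl⟩
    simp at h1
  have hdvd := hu.dvd_X_pow_sub_one_of_periodic hmon hirr hu0 hleast.1.2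
  obtain ⟨ζ, hζ⟩ := H.exists_isPrimitiveRoot_natCard
  obtain ⟨ξ, hξ⟩ := exists_aeval_eq_zero_of_dvd_X_pow_sub_one (degree_pos_of_irreducible hirr)
    hleast.1.1.ne' hdvd hζ
  refine ⟨ξ, hξ, H.image_val_eq_powersOf ?_⟩
  exact IsPrimitiveRoot.iff_orderOf.mpr (hu.orderOf_eq_of_aeval_eq_zero hmon hirr hu0 hleast hξ)

/-- if `f` is monic of degree `m`, `f(0) ≠ 0`, irreducible over `F`, of
finite order and without multiple zeros, then every `f`-subgroup `K` in an extension
field `L` of `F` is of the form `K = ⟨ξ⟩ = {1, ξ, ξ², …}` for some zero `ξ` of `f` in `L`. -/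
theorem fSubgroup_eq_powers_of_root {F L : Type*} [Field F] [Field L] [Algebra F L]
    (m : ℕ) (hm : 0 < m) (f : Polynomial F) (hmon : f.Monic) (hdeg : f.natDegree = m)
    (h0 : f.coeff 0 ≠ 0) (hirr : Irreducible f) (hsep : f.Separable)
    (hord : ∃ N : ℕ, 0 < N ∧ f ∣ (X : Polynomial F) ^ N - 1)
    (K : Set L) (hKgrp : ∃ H : Subgroup Lˣ, K = Units.val '' (H : Set Lˣ))
    (hKfin : K.Finite)
    (hK : ∃ u : ℕ → L, IsLRS f u ∧
      IsLeast {p : ℕ | 0 < p ∧ ∀ k, u (k + p) = u k} K.ncard ∧ Set.range u = K) :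
    ∃ ξ : L, (aeval ξ) f = 0 ∧ K = powersOf ξ :=
  fSubgroup_eq_powers_of_root_general f hmon hirr K hKgrp hK
end

section
/- Let q be a prime power and let ξ ∈ GF(q^m) have degree m over GF(q). Then ξ is nonstandard of degree m over GF(q) if and only if there exists a nonstandard q-polynomial L(x) = L_0 x + L_1 x^q + ⋯ + L_{m−1} x^{q^{m−1}} with coefficients in GF(q^m) such that L maps the set ⟨ξ⟩ = {1, ξ, ξ², …} onto itself. -/
open Polynomial

/-!
The conjugates `ξ, ξ^q, …, ξ^(q^(m-1))` are the `m` distinct roots of the minimal polynomial `f`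
of `ξ` (they are the images of `ξ` under the Frobenius powers, which form `Gal(E/F)`). Hence, by
Vandermonde, the `f`-sequences are exactly the sequences `k ↦ L(ξ^k) = ∑ Lᵢ (ξ^(q^i))^k` for a
unique `q`-polynomial `L`, and the geometric ones `k ↦ ζ^k` with `f(ζ) = 0` correspond to the
standard `L = x^(q^j)`. So an `f`-sequence generating `⟨ξ⟩` gives a `q`-polynomial mapping `⟨ξ⟩`
onto itself. Conversely, such an `L`, rescaled by an element of `⟨ξ⟩` so that `L(1) = 1`, gives
an `f`-sequence starting at `1` with range `⟨ξ⟩`; as `⟨ξ⟩` has `ord ξ` elements, its least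
period is `ord ξ`.
-/

section LinearRecurrence

variable {F E : Type*} [Field F] [Field E] [Algebra F E] {f : F[X]}

theorem IsLRS.ext {u v : ℕ → E} (hu : IsLRS f u) (hv : IsLRS f v)
    (h : ∀ i < f.natDegree, u i = v i) : u = v := by
  funext k
  induction k using Nat.strong_induction_on with
  | _ k ih =>
    obtain hk | ⟨j, rfl⟩ : k < f.natDegree ∨ ∃ j, k = j + f.natDegree :=
      (lt_or_ge k f.natDegree).imp_right fun hk => ⟨k - f.natDegree, by omega⟩
    · exact h k hk
    · rw [hu j, hv j]
      refine Finset.sum_congr rfl fun i hi => ?_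
      rw [ih (j + i) (by have := Finset.mem_range.1 hi; omega)]

theorem isLRS_pow (hf : f.Monic) {ζ : E} (hζ : aeval ζ f = 0) : IsLRS f (ζ ^ ·) := by
  have hroot : ζ ^ f.natDegree =
      ∑ i ∈ Finset.range f.natDegree, algebraMap F E (-(f.coeff i)) * ζ ^ i := by
    rw [aeval_eq_sum_range, Finset.sum_range_succ, hf.coeff_natDegree, one_smul,
      add_eq_zero_iff_eq_neg'] at hζ
    simp [hζ, Algebra.smul_def]
  intro k
  simp only [pow_add, hroot, Finset.mul_sum]
  exact Finset.sum_congr rfl fun i _ => by ring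

theorem isLRS_sum_mul {ι : Type*} [Fintype ι] {u : ι → ℕ → E} (hu : ∀ i, IsLRS f (u i))
    (a : ι → E) : IsLRS f fun k => ∑ i, a i * u i k := by
  intro k
  simp only [hu _ k, Finset.mul_sum]
  rw [Finset.sum_comm]
  exact Finset.sum_congr rfl fun j _ => Finset.sum_congr rfl fun i _ => by ring

theorem bijective_vecMul_vandermonde {m : ℕ} {ζ : Fin m → E} (hζ : Function.Injective ζ) :
    Function.Bijective (Matrix.vandermonde ζ).vecMul := by
  have hunit : IsUnit (Matrix.vandermonde ζ) :=
    (Matrix.isUnit_iff_isUnit_det _).2 (Matrix.det_vandermonde_ne_zero_iff.2 hζ).isUnit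
  exact ⟨Matrix.vecMul_injective_iff_isUnit.2 hunit, Matrix.vecMul_surjective_iff_isUnit.2 hunit⟩

/-- Both sides are determined by their first `m` terms, and the Vandermonde matrix of the `ζᵢ`
is invertible. -/
theorem IsLRS.exists_eq_sum_mul_pow (hf : f.Monic) {m : ℕ} (hm : f.natDegree = m)
    {ζ : Fin m → E} (hroot : ∀ i, aeval (ζ i) f = 0) (hζ : Function.Injective ζ)
    {u : ℕ → E} (hu : IsLRS f u) : ∃ a : Fin m → E, u = fun k => ∑ i, a i * ζ i ^ k := by
  obtain ⟨a, ha⟩ := (bijective_vecMul_vandermonde hζ).2 fun j => u j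
  refine ⟨a, hu.ext (isLRS_sum_mul (fun i => isLRS_pow hf (hroot i)) a) fun j hj => ?_⟩
  subst hm
  exact (congrFun ha ⟨j, hj⟩).symm

end LinearRecurrence

theorem Function.Periodic.ncard_range_le {α : Type*} {u : ℕ → α} {p : ℕ}
    (hu : Function.Periodic u p) (hp : 0 < p) : (Set.range u).ncard ≤ p := by
  have hrange : Set.range u = u '' Set.Iio p := by
    refine (Set.range_subset_iff.2 fun k => ?_).antisymm (Set.image_subset_range u _)
    exact ⟨k % p, Nat.mod_lt k hp, hu.map_mod_nat k⟩
  rw [hrange]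
  exact (Set.ncard_image_le (Set.finite_Iio p)).trans_eq (Set.ncard_Iio_nat p)

section Powers

variable {M : Type*} [Monoid M] {ξ : M}

theorem powersOf_eq_range (ξ : M) : powersOf ξ = Set.range (ξ ^ ·) := by
  ext x
  exact exists_congr fun _ => eq_comm

theorem image_pow_mul_powersOf (hξ : IsOfFinOrder ξ) (t : ℕ) :
    (ξ ^ t * ·) '' powersOf ξ = powersOf ξ := by
  ext x
  constructor
  · rintro ⟨_, ⟨k, rfl⟩, rfl⟩
    exact ⟨t + k, (pow_add ξ t k).symm⟩
  · rintro ⟨k, rfl⟩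
    obtain ⟨n, hn⟩ : ∃ n, orderOf ξ = n + 1 := Nat.exists_eq_add_one.2 hξ.orderOf_pos
    refine ⟨ξ ^ (t * n + k), ⟨_, rfl⟩, ?_⟩
    show ξ ^ t * ξ ^ (t * n + k) = ξ ^ k
    rw [← pow_add, show t + (t * n + k) = (n + 1) * t + k by ring, pow_add, pow_mul, ← hn,
      pow_orderOf_eq_one, one_pow, one_mul]

theorem ncard_powersOf (hξ : IsOfFinOrder ξ) : (powersOf ξ).ncard = orderOf ξ := by
  have hpowers : powersOf ξ = Submonoid.powers ξ := by
    rw [powersOf_eq_range, Submonoid.coe_powers]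
  rw [hpowers, ← Nat.card_coe_set_eq, SetLike.coe_sort_coe,
    ← Nat.card_congr (finEquivPowers hξ), Nat.card_eq_fintype_card, Fintype.card_fin]

theorem image_powersOf {α : Type*} (g : M → α) (ξ : M) :
    g '' powersOf ξ = Set.range fun k => g (ξ ^ k) := by
  rw [powersOf_eq_range, ← Set.range_comp]
  rfl

theorem isLeast_period_of_range_eq_powersOf (g : M → M) (hξ : IsOfFinOrder ξ)
    (hrange : (Set.range fun k => g (ξ ^ k)) = powersOf ξ) :
    IsLeast {p | 0 < p ∧ ∀ k, g (ξ ^ (k + p)) = g (ξ ^ k)} (orderOf ξ) :=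
  ⟨⟨hξ.orderOf_pos, fun k => by rw [pow_add, pow_orderOf_eq_one, mul_one]⟩,
    fun p ⟨hp, hper⟩ => ncard_powersOf hξ ▸ hrange ▸ Function.Periodic.ncard_range_le hper hp⟩

end Powers

section QPolynomial

variable {E : Type*} [Field E] (q : ℕ) {m : ℕ}

theorem qPolyMap_pow (c : Fin m → E) (x : E) (k : ℕ) :
    qPolyMap q c (x ^ k) = ∑ i, c i * (x ^ q ^ (i : ℕ)) ^ k := by
  simp only [qPolyMap, ← pow_mul, mul_comm k]

theorem qPolyMap_smul (a : E) (c : Fin m → E) (x : E) :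
    qPolyMap q (a • c) x = a * qPolyMap q c x := by
  simp only [qPolyMap, Finset.mul_sum, Pi.smul_apply, smul_eq_mul, mul_assoc]

theorem qPolyMap_of_forall_ne {c : Fin m → E} {j : Fin m}
    (hc : ∀ i, i ≠ j → c i = 0) (x : E) : qPolyMap q c x = c j * x ^ q ^ (j : ℕ) :=
  Fintype.sum_eq_single j fun i hi => by rw [hc i hi, zero_mul]

end QPolynomial

section FiniteField

variable {F E : Type*} [Field F] [Fintype F] [Field E] [Finite E] [Algebra F E]

theorem frobenius_pow_apply (i : ℕ) (x : E) :
    (FiniteField.frobeniusAlgEquivOfAlgebraic F E ^ i) x = x ^ Fintype.card F ^ i := by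
  rw [AlgEquiv.coe_pow, FiniteField.coe_frobeniusAlgEquivOfAlgebraic_iterate]

theorem aeval_pow_card_pow_minpoly (ξ : E) (i : ℕ) :
    aeval (ξ ^ Fintype.card F ^ i) (minpoly F ξ) = 0 := by
  rw [← frobenius_pow_apply, aeval_algHom_apply, minpoly.aeval, map_zero]

theorem exists_pow_card_pow_eq_of_aeval_minpoly {ξ ζ : E} (hζ : aeval ζ (minpoly F ξ) = 0) :
    ∃ i : Fin (Module.finrank F E), ξ ^ Fintype.card F ^ (i : ℕ) = ζ := by
  obtain ⟨σ, rfl⟩ := minpoly.exists_algEquiv_of_root' (IsIntegral.of_finite F ξ).isAlgebraic hζ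
  obtain ⟨i, rfl⟩ := (FiniteField.bijective_frobeniusAlgEquivOfAlgebraic_pow F E).2 σ
  exact ⟨i, (frobenius_pow_apply _ _).symm⟩

variable {ξ : E} (hξ : (minpoly F ξ).natDegree = Module.finrank F E)
include hξ

/-- A generator of `E` over `F` is moved by every nontrivial power of the Frobenius. -/
theorem pow_card_pow_injective :
    Function.Injective fun i : Fin (Module.finrank F E) => ξ ^ Fintype.card F ^ (i : ℕ) := by
  have hint := IsIntegral.of_finite F ξ
  have hgen : Algebra.adjoin F {ξ} = ⊤ :=
    Algebra.adjoin_eq_top_of_primitive_element hint.isAlgebraic <|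
      IntermediateField.eq_of_le_of_finrank_eq le_top <| by
        rw [IntermediateField.adjoin.finrank hint, IntermediateField.finrank_top', hξ]
  intro i j hij
  apply (FiniteField.bijective_frobeniusAlgEquivOfAlgebraic_pow F E).1
  apply AlgEquiv.coe_toAlgHom_injective
  refine AlgHom.ext_of_adjoin_eq_top hgen (Set.eqOn_singleton.2 ?_)
  simpa only [AlgEquiv.toAlgHom_apply, frobenius_pow_apply] using hij

theorem isLRS_minpoly_iff {u : ℕ → E} :
    IsLRS (minpoly F ξ) u ↔ ∃ c : Fin (Module.finrank F E) → E,
      ∀ k, u k = qPolyMap (Fintype.card F) c (ξ ^ k) := by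
  have hmonic := minpoly.monic (IsIntegral.of_finite F ξ)
  simp only [qPolyMap_pow]
  constructor
  · intro hu
    obtain ⟨c, rfl⟩ := hu.exists_eq_sum_mul_pow hmonic hξ (aeval_pow_card_pow_minpoly ξ ·)
      (pow_card_pow_injective hξ)
    exact ⟨c, fun k => rfl⟩
  · rintro ⟨c, hc⟩
    rw [funext hc]
    exact isLRS_sum_mul (fun i : Fin _ => isLRS_pow hmonic (aeval_pow_card_pow_minpoly ξ i)) c

theorem eq_of_qPolyMap_pow_eq {c c' : Fin (Module.finrank F E) → E}
    (h : ∀ k, qPolyMap (Fintype.card F) c (ξ ^ k) = qPolyMap (Fintype.card F) c' (ξ ^ k)) :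
    c = c' :=
  (bijective_vecMul_vandermonde (pow_card_pow_injective hξ)).1 <| funext fun j => by
    simpa [qPolyMap_pow, Matrix.vecMul, dotProduct] using h j

end FiniteField

section Nonstandard

variable {F E : Type*} [Field F] [Fintype F] [Field E] [Finite E] [Algebra F E] {ξ : E}
  (hξ : (minpoly F ξ).natDegree = Module.finrank F E)
include hξ

theorem exists_qPolyMap_of_isNonstandard (h : IsNonstandard F (Module.finrank F E) ξ) :
    ∃ c : Fin (Module.finrank F E) → E, (¬ ∃ j, ∀ i, i ≠ j → c i = 0) ∧
      qPolyMap (Fintype.card F) c '' powersOf ξ = powersOf ξ := by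
  obtain ⟨-, u, hu, -, hrange, hu0, hns⟩ := h
  obtain ⟨c, hc⟩ := (isLRS_minpoly_iff hξ).1 hu
  refine ⟨c, fun ⟨j, hj⟩ => ?_, by rw [image_powersOf, ← hrange, funext hc]⟩
  have hcj : c j = 1 := by
    have hc0 := hc 0
    rwa [hu0, pow_zero, qPolyMap_of_forall_ne _ hj, one_pow, mul_one, eq_comm] at hc0
  obtain ⟨i, hi⟩ := hns _ (aeval_pow_card_pow_minpoly ξ j)
  exact hi (by rw [hc, qPolyMap_of_forall_ne _ hj, hcj, one_mul, ← pow_mul, ← pow_mul, mul_comm])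

/-- The witnessing `f`-sequence is `k ↦ L(ξ ^ k)`. -/
theorem isNonstandard_of_image_qPolyMap_of_map_one (hord : IsOfFinOrder ξ)
    {c : Fin (Module.finrank F E) → E} (hc : ¬ ∃ j, ∀ i, i ≠ j → c i = 0)
    (himage : qPolyMap (Fintype.card F) c '' powersOf ξ = powersOf ξ)
    (hone : qPolyMap (Fintype.card F) c 1 = 1) :
    IsNonstandard F (Module.finrank F E) ξ := by
  set u : ℕ → E := fun k => qPolyMap (Fintype.card F) c (ξ ^ k)
  have hu : IsLRS (minpoly F ξ) u := (isLRS_minpoly_iff hξ).2 ⟨c, fun _ => rfl⟩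
  have hrange : Set.range u = powersOf ξ := by rw [← himage, image_powersOf]
  refine ⟨hξ, u, hu, isLeast_period_of_range_eq_powersOf _ hord hrange, hrange,
    by simpa only [u, pow_zero] using hone, fun ζ hζ => ?_⟩
  by_contra! hstd
  obtain ⟨j, rfl⟩ := exists_pow_card_pow_eq_of_aeval_minpoly hζ
  have hgeom : u = ((ξ ^ Fintype.card F ^ (j : ℕ)) ^ ·) :=
    hu.ext (isLRS_pow (minpoly.monic (IsIntegral.of_finite F ξ)) hζ) fun i hi => hstd ⟨i, hξ ▸ hi⟩
  have hsingle : c = Pi.single j 1 := eq_of_qPolyMap_pow_eq hξ fun k => by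
    rw [qPolyMap_of_forall_ne (c := Pi.single j 1) _ (fun i hi => Pi.single_eq_of_ne hi 1),
      Pi.single_eq_same, one_mul, ← pow_mul, mul_comm, pow_mul]
    exact congrFun hgeom k
  exact hc ⟨j, fun i hi => by rw [hsingle, Pi.single_eq_of_ne hi]⟩

theorem isNonstandard_of_image_qPolyMap {c : Fin (Module.finrank F E) → E}
    (hc : ¬ ∃ j, ∀ i, i ≠ j → c i = 0)
    (himage : qPolyMap (Fintype.card F) c '' powersOf ξ = powersOf ξ) :
    IsNonstandard F (Module.finrank F E) ξ := by
  -- `minpoly F 0 = X` has degree `1`, and every coefficient vector of length `1` is standard.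
  have hξ0 : ξ ≠ 0 := by
    rintro rfl
    rw [minpoly.zero, natDegree_X] at hξ
    refine hc ⟨⟨0, hξ ▸ one_pos⟩, fun i hi => absurd (Fin.ext ?_) hi⟩
    have := i.isLt
    rw [Fin.val_mk]
    omega
  have hord : IsOfFinOrder ξ := isOfFinOrder_iff_isUnit.2 (isUnit_iff_ne_zero.2 hξ0)
  obtain ⟨t, ht⟩ : qPolyMap (Fintype.card F) c 1 ∈ powersOf ξ :=
    himage ▸ ⟨1, ⟨0, (pow_zero ξ).symm⟩, rfl⟩
  obtain ⟨_, ⟨s, rfl⟩, hs⟩ : (1 : E) ∈ (ξ ^ t * ·) '' powersOf ξ :=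
    (image_pow_mul_powersOf hord t).symm ▸ ⟨0, (pow_zero ξ).symm⟩
  refine isNonstandard_of_image_qPolyMap_of_map_one hξ hord (c := ξ ^ s • c) ?_ ?_ ?_
  · rintro ⟨j, hj⟩
    exact hc ⟨j, fun i hi => (smul_eq_zero.1 (hj i hi)).resolve_left (pow_ne_zero s hξ0)⟩
  · rw [funext (qPolyMap_smul _ _ c), ← Set.image_image (ξ ^ s * ·), himage,
      image_pow_mul_powersOf hord]
  · rw [qPolyMap_smul, ht, mul_comm]
    exact hs

end Nonstandard

theorem isNonstandard_iff_qPoly_general {F E : Type*} [Field F] [Fintype F] [Field E] [Fintype E]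
    [Algebra F E] (m : ℕ) (hrank : Module.finrank F E = m)
    (ξ : E) (hdeg : (minpoly F ξ).natDegree = m) :
    IsNonstandard F m ξ ↔
      ∃ c : Fin m → E,
        (¬ ∃ j : Fin m, ∀ i : Fin m, i ≠ j → c i = 0) ∧
        qPolyMap (Fintype.card F) c '' powersOf ξ = powersOf ξ := by
  subst hrank
  exact ⟨exists_qPolyMap_of_isNonstandard hdeg,
    fun ⟨_, hc, himage⟩ => isNonstandard_of_image_qPolyMap hdeg hc himage⟩

/-- `ξ ∈ GF(qᵐ)` of degree `m` over `GF(q)` is nonstandard of degree `m`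
over `GF(q)` iff there is a nonstandard `q`-polynomial `L` over `GF(qᵐ)` (i.e. one not
of the form `c·x^{q^j}`) mapping the set `⟨ξ⟩ = {1, ξ, ξ², …}` onto itself. -/
theorem isNonstandard_iff_qPoly {F E : Type*} [Field F] [Fintype F] [Field E] [Fintype E]
    [Algebra F E] (m : ℕ) (hm : 0 < m) (hrank : Module.finrank F E = m)
    (ξ : E) (hdeg : (minpoly F ξ).natDegree = m) :
    IsNonstandard F m ξ ↔
      ∃ c : Fin m → E,
        (¬ ∃ j : Fin m, ∀ i : Fin m, i ≠ j → c i = 0) ∧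
        qPolyMap (Fintype.card F) c '' powersOf ξ = powersOf ξ :=
  isNonstandard_iff_qPoly_general m hrank ξ hdeg
end

section
/- Let q be a prime power, let φ be nonstandard of degree m over GF(q), and let ξ be an element of an extension of GF(q) with ⟨ξ⟩ = ⟨φ⟩ (i.e., ξ generates the same cyclic group as φ). Then ξ is also nonstandard of degree m over GF(q), with the same multiplicative order and the same q-order as φ. -/
open Polynomial

/-!
Write `ξ = φᵃ` and `φ = ξᵇ`, so that `ab ≡ 1` modulo the order of `φ`. If `u` is the
`f`-sequence generating `⟨φ⟩`, its decimation `v k = u (a k)` is a `g`-sequence for the minimal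
polynomial `g` of `ξ`: `f` divides `g(Xᵃ)`, so `g(Sᵃ)` kills `u`, where `S` is the shift.
Sampling `v` at multiples of `b` gives back `u`, so `u` and `v` have the same periods and the
same range. If `v` were the standard sequence `(ζᵏ)` of a zero `ζ` of `g`, then `u` would be the
standard sequence of the zero `ζᵇ` of `f`. The degrees agree because `F(ξ) = F(φ)`, and the
order and `q`-order agree because each of `ξ`, `φ` is a power of the other.
-/

section Shift

variable {F E : Type*} [Field F] [Field E] [Algebra F E]

variable (F E) in
noncomputable def shiftMap : Module.End F (ℕ → E) where
  toFun u := fun j => u (j + 1)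
  map_add' _ _ := rfl
  map_smul' _ _ := rfl

lemma shiftMap_pow_apply (i : ℕ) (u : ℕ → E) (j : ℕ) :
    (shiftMap F E ^ i) u j = u (j + i) := by
  induction i generalizing u with
  | zero => rfl
  | succ i ih =>
    rw [pow_succ, Module.End.mul_apply, ih]
    rfl

lemma aeval_shiftMap_pow_apply (p : F[X]) (t : ℕ) (u : ℕ → E) (j : ℕ) :
    aeval (shiftMap F E ^ t) p u j
      = ∑ i ∈ Finset.range (p.natDegree + 1), algebraMap F E (p.coeff i) * u (j + t * i) := by
  rw [aeval_eq_sum_range, LinearMap.sum_apply, Finset.sum_apply]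
  refine Finset.sum_congr rfl fun i _ => ?_
  rw [LinearMap.smul_apply, Pi.smul_apply, ← pow_mul, shiftMap_pow_apply, Algebra.smul_def]

lemma aeval_shiftMap_apply (p : F[X]) (u : ℕ → E) (j : ℕ) :
    aeval (shiftMap F E) p u j
      = ∑ i ∈ Finset.range (p.natDegree + 1), algebraMap F E (p.coeff i) * u (j + i) := by
  simpa using aeval_shiftMap_pow_apply p 1 u j

lemma isLRS_iff_aeval_shiftMap_eq_zero {f : F[X]} (hf : f.Monic) (u : ℕ → E) :
    IsLRS f u ↔ aeval (shiftMap F E) f u = 0 := by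
  have key : ∀ k, aeval (shiftMap F E) f u k = u (k + f.natDegree) -
      ∑ i ∈ Finset.range f.natDegree, algebraMap F E (-f.coeff i) * u (k + i) := fun k => by
    rw [aeval_shiftMap_apply, Finset.sum_range_succ, hf.coeff_natDegree]
    simp [add_comm]
  simp only [IsLRS, funext_iff, key, Pi.zero_apply, sub_eq_zero]

lemma isLRS_pow_of_aeval_eq_zero {f : F[X]} (hf : f.Monic) {ζ : E} (hζ : aeval ζ f = 0) :
    IsLRS f (ζ ^ ·) := by
  rw [isLRS_iff_aeval_shiftMap_eq_zero hf]
  funext k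
  rw [aeval_shiftMap_apply, Pi.zero_apply]
  simp_rw [pow_add, mul_left_comm _ (ζ ^ k), ← Finset.mul_sum, ← Algebra.smul_def,
    ← aeval_eq_sum_range, hζ, mul_zero]

lemma IsLRS.comp_mul {f g : F[X]} (hf : f.Monic) (hg : g.Monic) {a : ℕ}
    (hdvd : f ∣ g.comp (X ^ a)) {u : ℕ → E} (hu : IsLRS f u) :
    IsLRS g fun k => u (a * k) := by
  obtain ⟨h, hh⟩ := hdvd
  have hpow : aeval (shiftMap F E ^ a) g u = 0 := by
    rw [show shiftMap F E ^ a = aeval (shiftMap F E) (X ^ a : F[X]) by simp, ← aeval_comp, hh,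
      mul_comm, map_mul, Module.End.mul_apply,
      (isLRS_iff_aeval_shiftMap_eq_zero hf u).mp hu, map_zero]
  rw [isLRS_iff_aeval_shiftMap_eq_zero hg]
  funext k
  have hk := congrFun hpow (a * k)
  rw [aeval_shiftMap_pow_apply] at hk
  rw [aeval_shiftMap_apply]
  simpa [mul_add] using hk

end Shift

section Uniqueness

variable {F : Type*} (E : Type*) [Field F] [Field E] [Algebra F E]

noncomputable def linearRecurrenceOf (f : F[X]) : LinearRecurrence E :=
  ⟨f.natDegree, fun i => algebraMap F E (-f.coeff i)⟩

variable {E}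

lemma isLRS_iff_isSolution (f : F[X]) (u : ℕ → E) :
    IsLRS f u ↔ (linearRecurrenceOf E f).IsSolution u := by
  refine forall_congr' fun k => ?_
  rw [linearRecurrenceOf,
    Fin.sum_univ_eq_sum_range (fun i => algebraMap F E (-f.coeff i) * u (k + i))]

lemma IsLRS.eq_of_forall_lt {f : F[X]} {u w : ℕ → E} (hu : IsLRS f u) (hw : IsLRS f w)
    (h : ∀ i < f.natDegree, u i = w i) : u = w :=
  ((linearRecurrenceOf E f).eq_iff_eqOn_range_order u w ((isLRS_iff_isSolution f u).mp hu)
    ((isLRS_iff_isSolution f w).mp hw)).mpr fun i hi => h i (Finset.mem_range.mp hi)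

end Uniqueness

section Decimation

variable {α : Type*} {u : ℕ → α} {a b : ℕ}

lemma Function.Periodic.apply_mul_mul_of_modEq {n : ℕ} (hu : Function.Periodic u n)
    (hab : a * b ≡ 1 [MOD n]) (j : ℕ) : u (a * (b * j)) = u j := by
  rw [← hu.map_mod_nat, ← mul_assoc, (by simpa using hab.mul_right j : a * b * j ≡ j [MOD n]),
    hu.map_mod_nat]

variable (hab : ∀ j, u (a * (b * j)) = u j)
include hab

lemma periodic_comp_mul_iff {p : ℕ} :
    Function.Periodic (fun k => u (a * k)) p ↔ Function.Periodic u p := by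
  refine ⟨fun hv j => ?_, fun hu k => by simpa [mul_add] using hu.nat_mul a (a * k)⟩
  rw [← hab, ← hab j, mul_add]
  exact hv.nat_mul b (b * j)

lemma range_comp_mul : Set.range (fun k => u (a * k)) = Set.range u :=
  (Set.range_comp_subset_range _ u).antisymm fun _ ⟨j, hj⟩ => ⟨b * j, (hab j).trans hj⟩

end Decimation

section Powers

variable {M : Type*} [Monoid M] {φ ξ : M} {a b : ℕ}

lemma orderOf_eq_of_pow_eq (ha : ξ = φ ^ a) (hb : φ = ξ ^ b) : orderOf ξ = orderOf φ :=
  Nat.dvd_antisymm (ha ▸ orderOf_pow_dvd a) (hb ▸ orderOf_pow_dvd b)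

lemma mul_modEq_one_of_pow_eq (hφ : IsOfFinOrder φ) (ha : ξ = φ ^ a) (hb : φ = ξ ^ b) :
    a * b ≡ 1 [MOD orderOf φ] :=
  hφ.pow_eq_pow_iff_modEq.mp (by rw [pow_one, pow_mul, ← ha, ← hb])

end Powers

section MinimalPolynomial

open IntermediateField

variable {F E : Type*} [Field F] [Field E] [Algebra F E] {φ ξ : E} {a b : ℕ}

lemma minpoly_dvd_comp_X_pow (hb : φ = ξ ^ b) : minpoly F ξ ∣ (minpoly F φ).comp (X ^ b) :=
  minpoly.dvd F ξ (by rw [aeval_comp, map_pow, aeval_X, ← hb, minpoly.aeval])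

lemma aeval_pow_minpoly_eq_zero (hb : φ = ξ ^ b) {ζ : E} (hζ : aeval ζ (minpoly F ξ) = 0) :
    aeval (ζ ^ b) (minpoly F φ) = 0 := by
  obtain ⟨h, hh⟩ := minpoly_dvd_comp_X_pow (F := F) hb
  rw [← aeval_X (R := F) ζ, ← map_pow, ← aeval_comp, hh, map_mul, hζ, zero_mul]

lemma natDegree_minpoly_eq_of_pow_eq (hφ : IsIntegral F φ) (ha : ξ = φ ^ a) (hb : φ = ξ ^ b) :
    (minpoly F ξ).natDegree = (minpoly F φ).natDegree := by
  have hξ : IsIntegral F ξ := ha ▸ hφ.pow a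
  have hadjoin : F⟮ξ⟯ = F⟮φ⟯ := le_antisymm
    (adjoin_simple_le_iff.mpr (ha ▸ pow_mem (mem_adjoin_simple_self F φ) a))
    (adjoin_simple_le_iff.mpr (hb ▸ pow_mem (mem_adjoin_simple_self F ξ) b))
  rw [← adjoin.finrank hξ, hadjoin, adjoin.finrank hφ]

lemma qOrder_eq_of_pow_eq (ha : ξ = φ ^ a) (hb : φ = ξ ^ b) : qOrder F ξ = qOrder F φ := by
  have pow_mem_range : ∀ {x : E} (c d : ℕ), x ^ d ∈ Set.range (algebraMap F E) →
      (x ^ c) ^ d ∈ Set.range (algebraMap F E) := by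
    rintro x c d ⟨y, hy⟩
    exact ⟨y ^ c, by rw [map_pow, hy, ← pow_mul, ← pow_mul, mul_comm]⟩
  unfold qOrder
  congr 1
  ext d
  exact and_congr_right fun _ =>
    ⟨fun h => hb ▸ pow_mem_range b d h, fun h => ha ▸ pow_mem_range a d h⟩

end MinimalPolynomial

section Nonstandard

variable {F E : Type*} [Field F] [Field E] [Algebra F E] {m : ℕ} {φ ξ : E}

lemma exists_pow_eq_of_powersOf_eq (h : powersOf ξ = powersOf φ) : ∃ a : ℕ, ξ = φ ^ a :=
  show ξ ∈ powersOf φ from h ▸ ⟨1, (pow_one ξ).symm⟩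

lemma IsNonstandard.isIntegral (h : IsNonstandard F m φ) : IsIntegral F φ := by
  obtain ⟨hdeg, u, -, -, -, -, hroots⟩ := h
  by_contra hφ
  rw [minpoly.eq_zero hφ, natDegree_zero] at hdeg
  subst hdeg
  obtain ⟨i, -⟩ := hroots 0 (by rw [minpoly.eq_zero hφ, map_zero])
  exact i.elim0

lemma IsNonstandard.of_powersOf_eq (hφ : IsNonstandard F m φ)
    (hgen : powersOf ξ = powersOf φ) : IsNonstandard F m ξ := by
  obtain ⟨a, ha⟩ := exists_pow_eq_of_powersOf_eq hgen
  obtain ⟨b, hb⟩ := exists_pow_eq_of_powersOf_eq hgen.symm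
  have hint := hφ.isIntegral
  obtain ⟨hdeg, u, hu, hper, hrange, hu0, hroots⟩ := hφ
  have hab : ∀ j, u (a * (b * j)) = u j := Function.Periodic.apply_mul_mul_of_modEq hper.1.2
    (mul_modEq_one_of_pow_eq (orderOf_pos_iff.mp hper.1.1) ha hb)
  have hmonic : (minpoly F ξ).Monic := minpoly.monic (ha ▸ hint.pow a)
  have hgdeg : (minpoly F ξ).natDegree = m :=
    (natDegree_minpoly_eq_of_pow_eq hint ha hb).trans hdeg
  have hv : IsLRS (minpoly F ξ) fun k => u (a * k) :=
    hu.comp_mul (minpoly.monic hint) hmonic (minpoly_dvd_comp_X_pow ha)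
  refine ⟨hgdeg, fun k => u (a * k), hv, ?_, by rw [range_comp_mul hab, hrange, hgen],
    by simpa using hu0, fun ζ hζ => ?_⟩
  · rw [orderOf_eq_of_pow_eq ha hb]
    convert hper using 3
    exact and_congr_right' (periodic_comp_mul_iff hab)
  · by_contra! hne
    have hvζ : (fun k => u (a * k)) = (ζ ^ ·) :=
      hv.eq_of_forall_lt (isLRS_pow_of_aeval_eq_zero hmonic hζ)
        fun i hi => hne ⟨i, hgdeg ▸ hi⟩
    obtain ⟨i, hi⟩ := hroots (ζ ^ b) (aeval_pow_minpoly_eq_zero hb hζ)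
    exact hi (by rw [← hab, congrFun hvζ, pow_mul])

end Nonstandard

theorem nonstandard_of_same_powers_general {F E : Type*} [Field F] [Field E] [Algebra F E] (m : ℕ)
    (φ ξ : E) (hφ : IsNonstandard F m φ) (hgen : powersOf ξ = powersOf φ) :
    IsNonstandard F m ξ ∧ orderOf ξ = orderOf φ ∧ qOrder F ξ = qOrder F φ := by
  obtain ⟨a, ha⟩ := exists_pow_eq_of_powersOf_eq hgen
  obtain ⟨b, hb⟩ := exists_pow_eq_of_powersOf_eq hgen.symm
  exact ⟨hφ.of_powersOf_eq hgen, orderOf_eq_of_pow_eq ha hb, qOrder_eq_of_pow_eq ha hb⟩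

/-- if `φ` is nonstandard of degree `m` over `GF(q)` and `ξ` generates
the same cyclic group, `⟨ξ⟩ = ⟨φ⟩`, then `ξ` is also nonstandard of degree `m` over
`GF(q)`, with the same multiplicative order and the same `q`-order as `φ`. -/
theorem nonstandard_of_same_powers {F E : Type*} [Field F] [Fintype F] [Field E] [Fintype E]
    [Algebra F E] (m : ℕ) (hm : 0 < m)
    (φ ξ : E) (hφ : IsNonstandard F m φ) (hgen : powersOf ξ = powersOf φ) :
    IsNonstandard F m ξ ∧ orderOf ξ = orderOf φ ∧ qOrder F ξ = qOrder F φ :=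
  nonstandard_of_same_powers_general m φ ξ hφ hgen
end
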